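/- Asymmetric interpolation inequality: let n ≥ 1, a, b ≥ 0 and p, q > 0. Then for all u : ℤ^n → ℂ with ‖u‖_{a+p+q} < ∞ and v : ℤ^n → ℂ with ‖v‖_{b+p+q} < ∞ one has ‖u‖_{a+p} ‖v‖_{b+q} ≤ ‖u‖_{a+p+q} ‖v‖_b + ‖u‖_a ‖v‖_{b+p+q}. -/

import Mathlib

open scoped ENNReal NNReal

/-- The weight `⟨k⟩ = max(1,|k|)` with `|k|` the sup norm of `k ∈ ℤⁿ`. -/
noncomputable def wgt {n : ℕ} (k : Fin n → ℤ) : ℝ≥0∞ :=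
  ((max 1 (Finset.univ.sup fun i => (k i).natAbs) : ℕ) : ℝ≥0∞)

/-- The weighted ℓ² norm `‖u‖ₛ = (Σ_k ⟨k⟩^{2s}|u_k|²)^{1/2}` (possibly `+∞`). -/
noncomputable def wnorm (n : ℕ) (s : ℝ) (u : (Fin n → ℤ) → ℂ) : ℝ≥0∞ :=
  (∑' k : Fin n → ℤ, wgt k ^ (2 * s) * (‖u k‖₊ : ℝ≥0∞) ^ (2 : ℕ)) ^ (1 / 2 : ℝ)

/-! The proof is pointwise in frequency. Writing `‖u‖_s ‖v‖_t` as the square root of a double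
sum over `(k, k')`, it suffices to bound the weights: if `⟨k'⟩ ≤ ⟨k⟩`, moving the factor
`⟨k'⟩^{2q}` of `⟨k'⟩^{2(b+q)}` to `⟨k⟩^{2q}` gives the first term, and otherwise moving
`⟨k⟩^{2p}` of `⟨k⟩^{2(a+p)}` to `⟨k'⟩^{2p}` gives the second. Subadditivity of the square root
then splits the bound into the two products. -/

namespace ENNReal

theorem rpow_add_mul_rpow_add_le {x y : ℝ≥0∞} (hx₀ : x ≠ 0) (hx : x ≠ ⊤) (hy₀ : y ≠ 0)
    (hy : y ≠ ⊤) (s t : ℝ) {p q : ℝ} (hp : 0 ≤ p) (hq : 0 ≤ q) :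
    x ^ (s + p) * y ^ (t + q) ≤ x ^ (s + p + q) * y ^ t + x ^ s * y ^ (t + p + q) := by
  rcases le_total y x with hyx | hxy
  · calc x ^ (s + p) * y ^ (t + q) = x ^ (s + p) * y ^ q * y ^ t := by
          rw [rpow_add _ _ hy₀ hy]; ring
      _ ≤ x ^ (s + p) * x ^ q * y ^ t := by gcongr
      _ = x ^ (s + p + q) * y ^ t := by rw [← rpow_add _ _ hx₀ hx]
      _ ≤ _ := le_self_add
  · calc x ^ (s + p) * y ^ (t + q) = x ^ s * (x ^ p * y ^ (t + q)) := by
          rw [rpow_add _ _ hx₀ hx]; ring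
      _ ≤ x ^ s * (y ^ p * y ^ (t + q)) := by gcongr
      _ = x ^ s * y ^ (t + p + q) := by rw [← rpow_add _ _ hy₀ hy, add_right_comm, add_comm p]
      _ ≤ _ := le_add_self

end ENNReal

lemma wgt_ne_zero {n : ℕ} (k : Fin n → ℤ) : wgt k ≠ 0 := by
  simp [wgt]

lemma wgt_ne_top {n : ℕ} (k : Fin n → ℤ) : wgt k ≠ ⊤ := by
  simp [wgt]

lemma wgt_rpow_mul_wgt_rpow_le {n : ℕ} (k k' : Fin n → ℤ) (a b : ℝ) {p q : ℝ} (hp : 0 ≤ p)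
    (hq : 0 ≤ q) :
    wgt k ^ (2 * (a + p)) * wgt k' ^ (2 * (b + q)) ≤
      wgt k ^ (2 * (a + p + q)) * wgt k' ^ (2 * b) +
        wgt k ^ (2 * a) * wgt k' ^ (2 * (b + p + q)) := by
  simpa only [mul_add] using
    ENNReal.rpow_add_mul_rpow_add_le (wgt_ne_zero k) (wgt_ne_top k) (wgt_ne_zero k')
      (wgt_ne_top k') (2 * a) (2 * b) (by positivity : 0 ≤ 2 * p) (by positivity : 0 ≤ 2 * q)

lemma wnorm_mul_wnorm (n : ℕ) (s t : ℝ) (u v : (Fin n → ℤ) → ℂ) :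
    wnorm n s u * wnorm n t v =
      (∑' (k) (k'), wgt k ^ (2 * s) * wgt k' ^ (2 * t) *
        ((‖u k‖₊ : ℝ≥0∞) ^ (2 : ℕ) * (‖v k'‖₊ : ℝ≥0∞) ^ (2 : ℕ))) ^ (1 / 2 : ℝ) := by
  rw [wnorm, wnorm, ← ENNReal.mul_rpow_of_nonneg _ _ (by norm_num), ← ENNReal.tsum_mul_right]
  congr 1
  refine tsum_congr fun k => ?_
  rw [← ENNReal.tsum_mul_left]
  refine tsum_congr fun k' => ?_
  ring

theorem asymmetric_interpolation_general (n : ℕ)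
    (a b p q : ℝ) (hp : 0 < p) (hq : 0 < q)
    (u v : (Fin n → ℤ) → ℂ) :
    wnorm n (a + p) u * wnorm n (b + q) v ≤
      wnorm n (a + p + q) u * wnorm n b v + wnorm n a u * wnorm n (b + p + q) v := by
  rw [wnorm_mul_wnorm, wnorm_mul_wnorm, wnorm_mul_wnorm]
  refine (ENNReal.rpow_le_rpow ?_ (by norm_num)).trans
    (ENNReal.rpow_add_le_add_rpow _ _ (by norm_num) (by norm_num))
  rw [← ENNReal.tsum_add]
  refine ENNReal.tsum_le_tsum fun k => ?_
  rw [← ENNReal.tsum_add]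
  refine ENNReal.tsum_le_tsum fun k' => ?_
  rw [← add_mul]
  gcongr
  exact wgt_rpow_mul_wgt_rpow_le k k' a b hp.le hq.le

/-- Asymmetric interpolation inequality:
`‖u‖_{a+p} ‖v‖_{b+q} ≤ ‖u‖_{a+p+q} ‖v‖_b + ‖u‖_a ‖v‖_{b+p+q}`. -/
theorem asymmetric_interpolation (n : ℕ) (hn : 1 ≤ n)
    (a b p q : ℝ) (ha : 0 ≤ a) (hb : 0 ≤ b) (hp : 0 < p) (hq : 0 < q)
    (u v : (Fin n → ℤ) → ℂ)
    (hu : wnorm n (a + p + q) u < ⊤) (hv : wnorm n (b + p + q) v < ⊤) :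
    wnorm n (a + p) u * wnorm n (b + q) v ≤
      wnorm n (a + p + q) u * wnorm n b v + wnorm n a u * wnorm n (b + p + q) v :=
  asymmetric_interpolation_general n a b p q hp hq u v
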